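/- arXiv:2503.11148 — 3 statements merged into one kernel-verified Lean document; each statement's English description precedes it below -/
import Mathlib

section
/- Let n ≥ 1 and j ∈ {1,…,n}. For every v ∈ ℝⁿ with v ≠ 0, the integral over the unit sphere S^{n−1} (with respect to its surface measure σ) satisfies ∫_{S^{n−1}} θ_j · sgn(⟨θ, v⟩) dσ(θ) = (2 π^{(n−1)/2} / Γ((n+1)/2)) · v_j/|v|. -/
/-!
Compute `∫ ⟪x, a⟫ sgn ⟪x, v⟫ exp (-‖x‖²) dx` over the whole space in two ways. In polar
coordinates `x = r • θ` the integrand splits as `⟪θ, a⟫ sgn ⟪θ, v⟫ · r exp (-r²)`, so the integral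
is the sphere integral times `∫₀^∞ rⁿ exp (-r²) dr = Γ((n + 1)/2) / 2`. In an orthonormal basis
containing `v / ‖v‖` the Gaussian factors into one-dimensional integrals: `∫ |t| exp (-t²) dt = 1`
in the direction of `v`, `√π` in the other `n - 1` directions, and the odd integral
`∫ t exp (-t²) dt = 0` kills every component of `a` orthogonal to `v`. This gives
`π^((n - 1)/2) ⟪a, v⟫ / ‖v‖`.
-/

open MeasureTheory Set Metric Module
open scoped Real RealInnerProductSpace

namespace Real

theorem sign_mul_of_pos {c : ℝ} (hc : 0 < c) (t : ℝ) : sign (c * t) = sign t := by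
  rcases lt_trichotomy t 0 with h | rfl | h
  · rw [sign_of_neg h, sign_of_neg (mul_neg_of_pos_of_neg hc h)]
  · simp
  · rw [sign_of_pos h, sign_of_pos (mul_pos hc h)]

theorem sign_mul_self (t : ℝ) : sign t * t = |t| := by
  rcases lt_trichotomy t 0 with h | rfl | h
  · rw [sign_of_neg h, abs_of_neg h, neg_one_mul]
  · simp
  · rw [sign_of_pos h, abs_of_pos h, one_mul]

theorem measurable_sign : Measurable sign :=
  Measurable.ite measurableSet_Iio measurable_const <|
    Measurable.ite measurableSet_Ioi measurable_const measurable_const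

theorem integral_mul_exp_neg_sq : ∫ t : ℝ, t * exp (-t ^ 2) = 0 := by
  have h : ∫ t : ℝ, -t * exp (-(-t) ^ 2) = ∫ t : ℝ, t * exp (-t ^ 2) :=
    integral_neg_eq_self (fun t : ℝ => t * exp (-t ^ 2)) volume
  simp only [neg_sq, neg_mul, integral_neg] at h
  linarith

theorem integral_Ioi_pow_mul_exp_neg_sq (m : ℕ) :
    ∫ t in Ioi (0 : ℝ), t ^ m * exp (-t ^ 2) = Gamma ((m + 1) / 2) / 2 := by
  have h := integral_rpow_mul_exp_neg_rpow two_pos (neg_one_lt_zero.trans_le m.cast_nonneg)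
  rw [div_eq_inv_mul, ← one_div, ← h]
  refine setIntegral_congr_fun measurableSet_Ioi fun t _ => ?_
  rw [rpow_natCast, rpow_two]

theorem integral_sign_mul_mul_exp_neg_sq : ∫ t : ℝ, sign t * (t * exp (-t ^ 2)) = 1 := by
  have h : ∀ t : ℝ, sign t * (t * exp (-t ^ 2)) = |t| * exp (-|t| ^ 2) := fun t => by
    rw [← mul_assoc, sign_mul_self, sq_abs]
  simp_rw [h]
  rw [integral_comp_abs (f := fun t => t * exp (-t ^ 2))]
  have h1 := integral_Ioi_pow_mul_exp_neg_sq 1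
  norm_num [Gamma_one] at h1
  rw [h1]
  norm_num

theorem integral_Ioi_pow_pred_mul_mul_exp_neg_sq {d : ℕ} (hd : 0 < d) :
    ∫ r in Ioi (0 : ℝ), r ^ (d - 1) * (r * exp (-r ^ 2)) = Gamma ((d + 1) / 2) / 2 := by
  simp_rw [← mul_assoc, ← pow_succ, Nat.sub_add_cancel hd]
  exact integral_Ioi_pow_mul_exp_neg_sq d

end Real

theorem MeasureTheory.Measure.integral_volumeIoiPow (n : ℕ) (g : ℝ → ℝ) :
    ∫ r, g r ∂Measure.volumeIoiPow n = ∫ r in Ioi (0 : ℝ), r ^ n * g r := by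
  rw [Measure.volumeIoiPow, integral_withDensity_eq_integral_toReal_smul₀
    (by fun_prop) (ae_of_all _ fun _ => ENNReal.ofReal_lt_top),
    ← integral_subtype_comap measurableSet_Ioi fun r => r ^ n * g r]
  refine integral_congr_ae (ae_of_all _ fun r => ?_)
  simp [ENNReal.toReal_ofReal (pow_nonneg r.2.out.le n)]

section Polar

variable {E : Type*} [NormedAddCommGroup E] [NormedSpace ℝ E] [FiniteDimensional ℝ E]
  [MeasurableSpace E] [BorelSpace E] [Nontrivial E] (μ : Measure E) [μ.IsAddHaarMeasure]

theorem integral_eq_integral_toSphere_mul_integral_Ioi {G : E → ℝ} (f : sphere (0 : E) 1 → ℝ)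
    (g : ℝ → ℝ) (hG : ∀ (θ : sphere (0 : E) 1) (r : ℝ), 0 < r → G (r • (θ : E)) = f θ * g r) :
    ∫ x, G x ∂μ = (∫ θ, f θ ∂μ.toSphere) * ∫ r in Ioi (0 : ℝ), r ^ (finrank ℝ E - 1) * g r := by
  have hpolar := μ.measurePreserving_homeomorphUnitSphereProd.integral_comp
    (Homeomorph.measurableEmbedding _) fun z => G ((homeomorphUnitSphereProd E).symm z)
  simp only [Homeomorph.symm_apply_apply, homeomorphUnitSphereProd_symm_apply_coe] at hpolar
  have hpunctured : ∫ x, G x ∂μ = ∫ x : ({0}ᶜ : Set E), G x ∂μ.comap (↑) := by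
    rw [integral_subtype_comap (measurableSet_singleton 0).compl, restrict_compl_singleton]
  rw [hpunctured, hpolar, ← Measure.integral_volumeIoiPow, ← integral_prod_mul]
  exact integral_congr_ae (ae_of_all _ fun z => hG z.1 z.2 z.2.2.out)

end Polar

namespace EuclideanSpace

variable {ι : Type*}

section Fintype

variable [Fintype ι]

theorem integral_prod_apply (f : ι → ℝ → ℝ) :
    ∫ y : EuclideanSpace ℝ ι, ∏ l, f l (y l) = ∏ l, ∫ t, f l t := by
  rw [← (PiLp.volume_preserving_toLp ι).integral_comp
    (MeasurableEquiv.toLp 2 _).measurableEmbedding]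
  exact integral_fintype_prod_volume_eq_prod f

theorem integrable_prod_apply {f : ι → ℝ → ℝ} (hf : ∀ l, Integrable (f l)) :
    Integrable fun y : EuclideanSpace ℝ ι => ∏ l, f l (y l) := by
  rw [← (PiLp.volume_preserving_toLp ι).integrable_comp_emb
    (MeasurableEquiv.toLp 2 _).measurableEmbedding]
  exact Integrable.fintype_prod hf

end Fintype

variable [DecidableEq ι]

noncomputable def signGaussFactor (k i l : ι) (t : ℝ) : ℝ :=
  (if l = i then Real.sign t else 1) * ((if l = k then t else 1) * Real.exp (-t ^ 2))

theorem integrable_signGaussFactor (k i l : ι) : Integrable (signGaussFactor k i l) := by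
  have hpoly : Integrable fun t : ℝ => (if l = k then t else 1) * Real.exp (-t ^ 2) := by
    split_ifs
    · simpa using integrable_mul_exp_neg_mul_sq one_pos
    · simpa using integrable_exp_neg_mul_sq one_pos
  refine hpoly.bdd_mul (c := 1) ?_ (ae_of_all _ fun t => ?_)
  · split_ifs
    · exact Real.measurable_sign.aestronglyMeasurable
    · exact aestronglyMeasurable_const
  · split_ifs
    · rcases Real.sign_apply_eq t with h | h | h <;> simp [h]
    · simp

variable [Fintype ι]

theorem apply_mul_sign_apply_mul_exp_neg_norm_sq_eq_prod (y : EuclideanSpace ℝ ι) (k i : ι) :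
    y k * Real.sign (y i) * Real.exp (-‖y‖ ^ 2) = ∏ l, signGaussFactor k i l (y l) := by
  simp only [signGaussFactor, Finset.prod_mul_distrib, Finset.prod_ite_eq', Finset.mem_univ,
    if_true, real_norm_sq_eq, ← Finset.sum_neg_distrib, Real.exp_sum]
  ring

theorem integral_apply_mul_sign_apply_mul_exp_neg_norm_sq (k i : ι) :
    ∫ y : EuclideanSpace ℝ ι, y k * Real.sign (y i) * Real.exp (-‖y‖ ^ 2)
      = if k = i then π ^ (((Fintype.card ι : ℝ) - 1) / 2) else 0 := by
  simp_rw [apply_mul_sign_apply_mul_exp_neg_norm_sq_eq_prod, integral_prod_apply]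
  split_ifs with hki
  · subst hki
    have hother : ∀ l ∈ ({k}ᶜ : Finset ι), ∫ t, signGaussFactor k k l t = √π := fun l hl => by
      have hlk : l ≠ k := by simpa using hl
      simpa [signGaussFactor, hlk] using integral_gaussian 1
    rw [Fintype.prod_eq_mul_prod_compl k, Finset.prod_congr rfl hother, Finset.prod_const,
      Finset.card_compl, Finset.card_singleton]
    simp only [signGaussFactor, if_true, Real.integral_sign_mul_mul_exp_neg_sq, one_mul]
    rw [Real.sqrt_eq_rpow, ← Real.rpow_natCast, ← Real.rpow_mul Real.pi_nonneg,
      Nat.cast_pred (Fintype.card_pos_iff.mpr ⟨k⟩)]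
    ring_nf
  · refine Finset.prod_eq_zero (Finset.mem_univ k) ?_
    simpa [signGaussFactor, hki] using Real.integral_mul_exp_neg_sq

theorem integral_inner_mul_sign_apply_mul_exp_neg_norm_sq (c : EuclideanSpace ℝ ι) (i : ι) :
    ∫ y : EuclideanSpace ℝ ι, ⟪y, c⟫ * Real.sign (y i) * Real.exp (-‖y‖ ^ 2)
      = π ^ (((Fintype.card ι : ℝ) - 1) / 2) * c i := by
  have hsum : ∀ y : EuclideanSpace ℝ ι, ⟪y, c⟫ * Real.sign (y i) * Real.exp (-‖y‖ ^ 2)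
      = ∑ k, c k * (y k * Real.sign (y i) * Real.exp (-‖y‖ ^ 2)) := fun y => by
    simp only [PiLp.inner_apply, RCLike.inner_apply, conj_trivial, Finset.sum_mul]
    exact Finset.sum_congr rfl fun k _ => by ring
  have hint : ∀ k, Integrable fun y : EuclideanSpace ℝ ι =>
      c k * (y k * Real.sign (y i) * Real.exp (-‖y‖ ^ 2)) := fun k => by
    simp_rw [apply_mul_sign_apply_mul_exp_neg_norm_sq_eq_prod]
    exact (integrable_prod_apply (integrable_signGaussFactor k i)).const_mul _
  simp_rw [hsum]
  rw [integral_finsetSum _ fun k _ => hint k]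
  simp_rw [integral_const_mul, integral_apply_mul_sign_apply_mul_exp_neg_norm_sq, mul_ite, mul_zero,
    Finset.sum_ite_eq', Finset.mem_univ, if_true, mul_comm]

end EuclideanSpace

section InnerProductSpace

variable {F : Type*} [NormedAddCommGroup F] [InnerProductSpace ℝ F] [FiniteDimensional ℝ F]
  [MeasurableSpace F] [BorelSpace F]

theorem integral_inner_mul_sign_inner_mul_exp_neg_norm_sq {u : F} (hu : ‖u‖ = 1) (a : F) :
    ∫ x : F, ⟪x, a⟫ * Real.sign ⟪x, u⟫ * Real.exp (-‖x‖ ^ 2)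
      = π ^ (((finrank ℝ F : ℝ) - 1) / 2) * ⟪a, u⟫ := by
  have hu' : Orthonormal ℝ ((↑) : ({u} : Set F) → F) := by simp [hu]
  obtain ⟨s, b, hus, hb⟩ := hu'.exists_orthonormalBasis_extension
  let i : s := ⟨u, hus rfl⟩
  have hrepr : ∀ x, b.repr x i = ⟪u, x⟫ := fun x => by rw [b.repr_apply_apply, hb]
  classical
  rw [← b.measurePreserving_repr_symm.integral_comp b.repr.symm.toHomeomorph.measurableEmbedding]
  have hpull : ∀ y : EuclideanSpace ℝ s,
      ⟪b.repr.symm y, a⟫ * Real.sign ⟪b.repr.symm y, u⟫ * Real.exp (-‖b.repr.symm y‖ ^ 2)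
        = ⟪y, b.repr a⟫ * Real.sign (y i) * Real.exp (-‖y‖ ^ 2) := fun y => by
    rw [real_inner_comm u, ← hrepr, ← b.repr.inner_map_map, LinearIsometryEquiv.norm_map]
    simp
  simp_rw [hpull, EuclideanSpace.integral_inner_mul_sign_apply_mul_exp_neg_norm_sq, hrepr,
    ← finrank_eq_card_basis b.toBasis, real_inner_comm]

theorem integral_toSphere_inner_mul_sign_inner (a : F) {v : F} (hv : v ≠ 0) :
    ∫ θ : sphere (0 : F) 1, ⟪(θ : F), a⟫ * Real.sign ⟪(θ : F), v⟫ ∂(volume : Measure F).toSphere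
      = 2 * π ^ (((finrank ℝ F : ℝ) - 1) / 2) / Real.Gamma (((finrank ℝ F : ℝ) + 1) / 2)
          * (⟪a, v⟫ / ‖v‖) := by
  have : Nontrivial F := nontrivial_of_ne v 0 hv
  have hv' : 0 < ‖v‖⁻¹ := inv_pos.mpr (norm_pos_iff.mpr hv)
  have hsign : ∀ x : F, Real.sign ⟪x, ‖v‖⁻¹ • v⟫ = Real.sign ⟪x, v⟫ := fun x => by
    rw [real_inner_smul_right, Real.sign_mul_of_pos hv']
  have hpolar := integral_eq_integral_toSphere_mul_integral_Ioi (volume : Measure F)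
    (G := fun x => ⟪x, a⟫ * Real.sign ⟪x, ‖v‖⁻¹ • v⟫ * Real.exp (-‖x‖ ^ 2))
    (fun θ => ⟪(θ : F), a⟫ * Real.sign ⟪(θ : F), v⟫) (fun r => r * Real.exp (-r ^ 2))
    fun θ r hr => by
      rw [hsign, real_inner_smul_left, real_inner_smul_left, Real.sign_mul_of_pos hr, norm_smul,
        Real.norm_of_nonneg hr.le, norm_eq_of_mem_sphere θ, mul_one]
      ring
  have hu : ‖‖v‖⁻¹ • v‖ = 1 := by
    rw [norm_smul, norm_inv, norm_norm, inv_mul_cancel₀ (norm_ne_zero_iff.mpr hv)]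
  rw [integral_inner_mul_sign_inner_mul_exp_neg_norm_sq hu a,
    Real.integral_Ioi_pow_pred_mul_mul_exp_neg_sq finrank_pos, real_inner_smul_right] at hpolar
  have hΓ : Real.Gamma (((finrank ℝ F : ℝ) + 1) / 2) ≠ 0 :=
    (Real.Gamma_pos_of_pos (by positivity)).ne'
  field_simp at hpolar ⊢
  linarith

end InnerProductSpace

theorem sphere_integral_sign_inner_general (n : ℕ) (j : Fin n)
    (v : EuclideanSpace ℝ (Fin n)) (hv : v ≠ 0) :
    ∫ θ : Metric.sphere (0 : EuclideanSpace ℝ (Fin n)) 1,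
        ((θ : EuclideanSpace ℝ (Fin n)) j) *
          Real.sign (inner ℝ (θ : EuclideanSpace ℝ (Fin n)) v : ℝ)
        ∂((volume : Measure (EuclideanSpace ℝ (Fin n))).toSphere)
      = 2 * Real.pi ^ (((n : ℝ) - 1) / 2) / Real.Gamma (((n : ℝ) + 1) / 2) * (v j / ‖v‖) := by
  have hcoord : ∀ x : EuclideanSpace ℝ (Fin n), x j = ⟪x, EuclideanSpace.single j 1⟫ := fun x => by
    simp [EuclideanSpace.inner_single_right]
  simp_rw [hcoord, integral_toSphere_inner_mul_sign_inner _ hv, finrank_euclideanSpace_fin,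
    real_inner_comm v]

/-- For `v ≠ 0` in `ℝⁿ`, the integral over the unit sphere (with respect
to its surface measure) satisfies
`∫_{S^{n-1}} θⱼ sgn⟨θ, v⟩ dσ(θ) = (2 π^{(n-1)/2} / Γ((n+1)/2)) vⱼ/‖v‖`. -/
theorem sphere_integral_sign_inner (n : ℕ) (hn : 1 ≤ n) (j : Fin n)
    (v : EuclideanSpace ℝ (Fin n)) (hv : v ≠ 0) :
    ∫ θ : Metric.sphere (0 : EuclideanSpace ℝ (Fin n)) 1,
        ((θ : EuclideanSpace ℝ (Fin n)) j) *
          Real.sign (inner ℝ (θ : EuclideanSpace ℝ (Fin n)) v : ℝ)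
        ∂((volume : Measure (EuclideanSpace ℝ (Fin n))).toSphere)
      = 2 * Real.pi ^ (((n : ℝ) - 1) / 2) / Real.Gamma (((n : ℝ) + 1) / 2) * (v j / ‖v‖) :=
  sphere_integral_sign_inner_general n j v hv
end

section
/- Let n ≥ 1 and let A = (A_1,…,A_n) where each A_k = [[a_k, b_k],[c_k, d_k]] is a real 2×2 matrix of determinant 1 with b_k ≠ 0, and set A_k^{−1} = [[d_k, −b_k],[−c_k, a_k]]. Then for every Schwartz function f : ℝⁿ → ℂ and every x ∈ ℝⁿ, the inversion formula 𝓛_{A^{−1}}(𝓛_A f)(x) = f(x) holds, where both linear canonical transforms are absolutely convergent integrals. -/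
open MeasureTheory Filter Topology
open scoped Real ENNReal RealInnerProductSpace

noncomputable section

/-- The constant `c̃ₙ = Γ((n+1)/2) / π^((n+1)/2)`. -/
def rieszConst (n : ℕ) : ℝ :=
  Real.Gamma (((n : ℝ) + 1) / 2) / Real.pi ^ (((n : ℝ) + 1) / 2)

/-- The chirp function `exp(i Σₖ wₖ yₖ²)`. -/
def chirp {n : ℕ} (w : Fin n → ℝ) (y : EuclideanSpace ℝ (Fin n)) : ℂ :=
  Complex.exp (Complex.I * ((∑ k, w k * y k ^ 2 : ℝ) : ℂ))

/-- The truncated Riesz-type singular integral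
`∫_{‖x-y‖ ≥ ε} (xⱼ - yⱼ) ‖x - y‖^{-(n+1)} g y dy`. -/
def truncRiesz {n : ℕ} (j : Fin n) (g : EuclideanSpace ℝ (Fin n) → ℂ)
    (x : EuclideanSpace ℝ (Fin n)) (ε : ℝ) : ℂ :=
  ∫ y in {y : EuclideanSpace ℝ (Fin n) | ε ≤ ‖x - y‖},
    ((x j - y j : ℝ) : ℂ) / ((‖x - y‖ : ℝ) : ℂ) ^ (n + 1) * g y

/-- The principal value `lim_{ε → 0⁺}` of the truncated Riesz-type singular integral. -/
def pvRiesz {n : ℕ} (j : Fin n) (g : EuclideanSpace ℝ (Fin n) → ℂ)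
    (x : EuclideanSpace ℝ (Fin n)) : ℂ :=
  limUnder (𝓝[>] (0 : ℝ)) (truncRiesz j g x)

/-- The `j`-th linear canonical Riesz transform with parameters `a b d`
(entries of the matrices `Aₖ = [[aₖ, bₖ], [cₖ, dₖ]]`). -/
def lcRiesz {n : ℕ} (a b d : Fin n → ℝ) (j : Fin n)
    (f : EuclideanSpace ℝ (Fin n) → ℂ) (x : EuclideanSpace ℝ (Fin n)) : ℂ :=
  (rieszConst n : ℂ) * chirp (fun k => -(d k) / (2 * b k)) x *
    pvRiesz j (fun y => f y * chirp (fun k => a k / (2 * b k)) y) x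

/-- The classical `j`-th Riesz transform (principal value). -/
def rieszTrans {n : ℕ} (j : Fin n) (f : EuclideanSpace ℝ (Fin n) → ℂ)
    (x : EuclideanSpace ℝ (Fin n)) : ℂ :=
  (rieszConst n : ℂ) * pvRiesz j f x

/-- The kernel of the linear canonical transform with parameters `a b d`. -/
def lctKernel {n : ℕ} (a b d : Fin n → ℝ)
    (x u : EuclideanSpace ℝ (Fin n)) : ℂ :=
  ∏ k, ((2 * (Real.pi : ℂ) * Complex.I * (b k : ℂ))⁻¹ ^ ((1 : ℂ) / 2) *
    (Complex.exp (Complex.I * ((a k * x k ^ 2 / (2 * b k) : ℝ) : ℂ)) *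
      (Complex.exp (-(Complex.I * ((x k * u k / b k : ℝ) : ℂ))) *
        Complex.exp (Complex.I * ((d k * u k ^ 2 / (2 * b k) : ℝ) : ℂ)))))

/-- The linear canonical transform with parameters `a b d`. -/
def lct {n : ℕ} (a b d : Fin n → ℝ) (f : EuclideanSpace ℝ (Fin n) → ℂ)
    (u : EuclideanSpace ℝ (Fin n)) : ℂ :=
  ∫ x, f x * lctKernel a b d x u

end

/-!
The kernel factors as `K_A(t, u) = C_b · chirp_{a/2b}(t) · 𝐞(-⟪t, T u⟫) · chirp_{d/2b}(u)` with
`C_b = lctConst b` and `T u = lctScale b u = (u_k / (2π b_k))_k`, so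
`𝓛_A f (u) = C_b · chirp_{d/2b}(u) · 𝓕 g (T u)` for `g = f · chirp_{a/2b}`; `g` is
again a Schwartz function because chirps have temperate growth. In `𝓛_{A⁻¹}` the chirps in `u`
cancel, and after the substitution `ξ = T u` what remains is Fourier inversion
`𝓕⁻ (𝓕 g) x = g x`. Finally `C_b C_{-b} = |det T|` cancels the Jacobian and the chirp in `x`
cancels the one in `g`.
-/

open Complex Real MeasureTheory Asymptotics
open scoped ContDiff ComplexConjugate FourierTransform

section TemperateGrowth

variable {E F : Type*} [NormedAddCommGroup E] [NormedSpace ℝ E]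
  [NormedAddCommGroup F] [NormedSpace ℝ F]

theorem Function.HasTemperateGrowth.fderiv {f : E → F} (hf : f.HasTemperateGrowth) :
    (_root_.fderiv ℝ f).HasTemperateGrowth := by
  refine ⟨hf.1.fderiv_right (by simp), fun n => ?_⟩
  obtain ⟨k, C, h⟩ := hf.2 (n + 1)
  exact ⟨k, C, fun x => norm_iteratedFDeriv_fderiv.trans_le (h x)⟩

theorem Function.HasTemperateGrowth.of_fderiv_eq_smul {𝕜 : Type*} [RCLike 𝕜] {f : E → 𝕜}
    {B : E → E →L[ℝ] 𝕜} (hf : ContDiff ℝ ∞ f) (hB : B.HasTemperateGrowth)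
    (hfB : _root_.fderiv ℝ f = fun x => f x • B x) {k : ℕ} {C : ℝ}
    (h : ∀ x, ‖f x‖ ≤ C * (1 + ‖x‖) ^ k) : f.HasTemperateGrowth := by
  rw [Function.hasTemperateGrowth_iff_isBigO]
  refine ⟨hf, fun n => ?_⟩
  suffices ∀ n, ∃ k, ∀ m ≤ n, iteratedFDeriv ℝ m f =O[⊤] fun x => (1 + ‖x‖) ^ k from
    (this n).imp fun _ hk => hk n le_rfl
  intro n
  induction n with
  | zero =>
    refine ⟨k, fun m hm => ?_⟩
    obtain rfl := Nat.le_zero.1 hm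
    refine isBigO_top.2 ⟨C, fun x => ?_⟩
    rw [norm_iteratedFDeriv_zero, norm_pow, Real.norm_of_nonneg (by positivity)]
    exact h x
  | succ n ih =>
    obtain ⟨k₁, h₁⟩ := ih
    obtain ⟨k₂, h₂⟩ := hB.isBigO_uniform n
    have hpow : (fun x : E => (1 + ‖x‖) ^ k₁) =O[⊤] fun x => (1 + ‖x‖) ^ (k₁ + k₂) :=
      isBigO_of_le _ fun x => by
        rw [Real.norm_of_nonneg (by positivity), Real.norm_of_nonneg (by positivity)]
        exact pow_le_pow_right₀ (by simp) (by omega)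
    refine ⟨k₁ + k₂, fun m hm => ?_⟩
    rcases Nat.of_le_succ hm with hm | rfl
    · exact (h₁ m hm).trans hpow
    have leibniz (x : E) : ‖iteratedFDeriv ℝ (n + 1) f x‖ ≤ ∑ i ∈ Finset.range (n + 1),
        (n.choose i : ℝ) * ‖iteratedFDeriv ℝ i f x‖ * ‖iteratedFDeriv ℝ (n - i) B x‖ := by
      rw [← norm_iteratedFDeriv_fderiv, hfB]
      exact norm_iteratedFDeriv_smul_le hf hB.1 x (mod_cast le_top)
    refine (IsBigO.of_norm_le leibniz).trans (.fun_sum fun i hi => ?_)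
    simp_rw [mul_assoc, pow_add]
    have hi : i ≤ n := Nat.lt_succ_iff.1 (Finset.mem_range.1 hi)
    exact .const_mul_left (.mul (h₁ i hi).norm_left (h₂ (n - i) (Nat.sub_le n i)).norm_left) _

theorem Function.HasTemperateGrowth.cexp_I_mul {q : E → ℝ} (hq : q.HasTemperateGrowth) :
    (fun x => cexp (I * q x)).HasTemperateGrowth := by
  let L : (E →L[ℝ] ℝ) →L[ℝ] E →L[ℝ] ℂ := I • ContinuousLinearMap.compL ℝ E ℝ ℂ ofRealCLM
  refine .of_fderiv_eq_smul (B := fun x => L (_root_.fderiv ℝ q x))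
    (contDiff_const.mul (ofRealCLM.contDiff.comp hq.1)).cexp
    (L.hasTemperateGrowth.comp hq.fderiv) (funext fun x => ?_) (k := 0) (C := 1)
    fun x => by simp [mul_comm I, norm_exp_ofReal_mul_I]
  exact ((ofRealCLM.hasFDerivAt.comp x (hq.1.differentiable (by simp) x).hasFDerivAt).const_mul
    I).cexp.fderiv

end TemperateGrowth

theorem Complex.cpow_half_mul_conj_cpow_half {z : ℂ} (hz : z.arg ≠ π) :
    z ^ (1 / 2 : ℂ) * conj z ^ (1 / 2 : ℂ) = ‖z‖ := by
  have h := cpow_conj z (1 / 2) hz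
  rw [map_div₀, map_one, map_ofNat] at h
  rw [show conj z ^ (1 / 2 : ℂ) = conj (z ^ (1 / 2 : ℂ)) by rw [h, conj_conj], mul_conj,
    normSq_eq_norm_sq, show (1 / 2 : ℂ) = ((1 / 2 : ℝ) : ℂ) by push_cast; rfl,
    norm_cpow_real, ← Real.rpow_natCast, ← Real.rpow_mul (norm_nonneg z)]
  norm_num

section Chirp

variable {n : ℕ}

theorem chirp_hasTemperateGrowth (w : Fin n → ℝ) : (chirp w).HasTemperateGrowth :=
  .cexp_I_mul <| .sum fun k _ =>
    .fun_mul (.const _) (.fun_pow (EuclideanSpace.proj k).hasTemperateGrowth 2)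

theorem norm_chirp (w : Fin n → ℝ) (y : EuclideanSpace ℝ (Fin n)) : ‖chirp w y‖ = 1 := by
  rw [chirp, mul_comm, norm_exp_ofReal_mul_I]

theorem chirp_mul_chirp_eq_one {w w' : Fin n → ℝ} (hw : ∀ k, w k + w' k = 0)
    (y : EuclideanSpace ℝ (Fin n)) : chirp w y * chirp w' y = 1 := by
  rw [chirp, chirp, ← Complex.exp_add, ← mul_add, ← ofReal_add, ← Finset.sum_add_distrib]
  simp [← add_mul, hw]

end Chirp

section ChangeOfVariables

variable {E F : Type*} [NormedAddCommGroup E] [NormedSpace ℝ E] [MeasurableSpace E]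
  [BorelSpace E] [FiniteDimensional ℝ E] (μ : Measure E) [μ.IsAddHaarMeasure]
  [NormedAddCommGroup F] {T : E →ₗ[ℝ] E}

theorem LinearMap.exists_measurableEquiv_map_eq (hT : LinearMap.det T ≠ 0) :
    ∃ e : E ≃ᵐ E, ⇑e = T ∧ μ.map e = ENNReal.ofReal |(LinearMap.det T)⁻¹| • μ :=
  ⟨(T.equivOfDetNeZero hT).toContinuousLinearEquiv.toHomeomorph.toMeasurableEquiv, rfl,
    Measure.map_linearMap_addHaar_eq_smul_addHaar μ hT⟩

theorem integrable_comp_linearMap_iff (hT : LinearMap.det T ≠ 0) {h : E → F} :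
    Integrable (fun x => h (T x)) μ ↔ Integrable h μ := by
  obtain ⟨e, he, hmap⟩ := LinearMap.exists_measurableEquiv_map_eq μ hT
  rw [← he, ← Function.comp_def, ← integrable_map_equiv, hmap,
    integrable_smul_measure (by simpa using hT) ENNReal.ofReal_ne_top]

theorem integral_comp_linearMap [NormedSpace ℝ F] (hT : LinearMap.det T ≠ 0) (h : E → F) :
    ∫ x, h (T x) ∂μ = |LinearMap.det T|⁻¹ • ∫ y, h y ∂μ := by
  obtain ⟨e, he, hmap⟩ := LinearMap.exists_measurableEquiv_map_eq μ hT
  rw [← he, ← integral_map_equiv, hmap, integral_smul_measure,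
    ENNReal.toReal_ofReal (by positivity), abs_inv]

end ChangeOfVariables

section LinearCanonicalTransform

variable {n : ℕ}

noncomputable def lctScale (b : Fin n → ℝ) :
    EuclideanSpace ℝ (Fin n) →ₗ[ℝ] EuclideanSpace ℝ (Fin n) :=
  Matrix.toLpLin 2 2 (Matrix.diagonal fun k => (2 * π * b k)⁻¹)

noncomputable def lctConst (b : Fin n → ℝ) : ℂ :=
  ∏ k, (2 * (π : ℂ) * I * (b k : ℂ))⁻¹ ^ ((1 : ℂ) / 2)

theorem lctScale_apply (b : Fin n → ℝ) (u : EuclideanSpace ℝ (Fin n)) (k : Fin n) :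
    lctScale b u k = (2 * π * b k)⁻¹ * u k := by
  simp [lctScale, Matrix.toLpLin_apply, Matrix.mulVec_diagonal]

theorem det_lctScale (b : Fin n → ℝ) :
    LinearMap.det (lctScale b) = ∏ k, (2 * π * b k)⁻¹ := by
  rw [lctScale, Matrix.toLpLin_eq_toLin, LinearMap.det_toLin, Matrix.det_diagonal]

theorem two_pi_mul_inner_lctScale (b : Fin n → ℝ) (t u : EuclideanSpace ℝ (Fin n)) :
    2 * π * ⟪t, lctScale b u⟫ = ∑ k, t k * u k / b k := by
  simp only [PiLp.inner_apply, lctScale_apply, Finset.mul_sum, RCLike.inner_apply, conj_trivial]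
  refine Finset.sum_congr rfl fun k _ => ?_
  rw [mul_inv, mul_inv, ← mul_assoc (2 * π)]
  field_simp

theorem inner_lctScale_neg (b : Fin n → ℝ) (u x : EuclideanSpace ℝ (Fin n)) :
    ⟪u, lctScale (fun k => -b k) x⟫ = -⟪lctScale b u, x⟫ := by
  simp only [PiLp.inner_apply, lctScale_apply, RCLike.inner_apply, conj_trivial,
    ← Finset.sum_neg_distrib]
  refine Finset.sum_congr rfl fun k _ => ?_
  rw [mul_neg, inv_neg]
  ring

theorem lctKernel_eq (a b d : Fin n → ℝ) (t u : EuclideanSpace ℝ (Fin n)) :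
    lctKernel a b d t u = lctConst b * chirp (fun k => a k / (2 * b k)) t *
      𝐞 (-⟪t, lctScale b u⟫) * chirp (fun k => d k / (2 * b k)) u := by
  have phase : (𝐞 (-⟪t, lctScale b u⟫) : ℂ) = cexp (-(I * ↑(∑ k, t k * u k / b k))) := by
    rw [fourierChar_apply, mul_neg, two_pi_mul_inner_lctScale]
    push_cast
    ring_nf
  rw [phase]
  simp only [lctKernel, lctConst, chirp, Finset.prod_mul_distrib, ← Complex.exp_sum]
  push_cast
  simp only [Finset.mul_sum, Finset.sum_neg_distrib, div_mul_eq_mul_div, mul_assoc]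

theorem lct_eq_fourier (a b d : Fin n → ℝ) (f : EuclideanSpace ℝ (Fin n) → ℂ)
    (u : EuclideanSpace ℝ (Fin n)) :
    lct a b d f u = lctConst b * chirp (fun k => d k / (2 * b k)) u *
      𝓕 (fun t => f t * chirp (fun k => a k / (2 * b k)) t) (lctScale b u) := by
  rw [lct, fourier_eq, ← integral_const_mul]
  congr 1 with t
  rw [lctKernel_eq, Circle.smul_def, smul_eq_mul]
  ring

theorem integrable_mul_lctKernel (a b d : Fin n → ℝ) {f : EuclideanSpace ℝ (Fin n) → ℂ}
    (hf : Integrable f) (u : EuclideanSpace ℝ (Fin n)) :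
    Integrable fun t => f t * lctKernel a b d t u := by
  have hg : Integrable fun t => f t * chirp (fun k => a k / (2 * b k)) t :=
    hf.mul_bdd (chirp_hasTemperateGrowth _).1.continuous.aestronglyMeasurable
      (ae_of_all _ fun t => (norm_chirp _ t).le)
  have hkernel : (fun t => f t * lctKernel a b d t u) = fun t =>
      lctConst b * chirp (fun k => d k / (2 * b k)) u *
        (𝐞 (-⟪t, lctScale b u⟫) • (f t * chirp (fun k => a k / (2 * b k)) t)) := by
    ext t
    rw [lctKernel_eq, Circle.smul_def, smul_eq_mul]
    ring
  rw [hkernel]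
  exact ((fourierIntegral_convergent_iff (lctScale b u)).2 hg).const_mul _

theorem lct_mul_lctKernel_inv (a b d : Fin n → ℝ) (f : EuclideanSpace ℝ (Fin n) → ℂ)
    (u x : EuclideanSpace ℝ (Fin n)) :
    lct a b d f u * lctKernel d (fun k => -b k) a u x =
      lctConst b * lctConst (fun k => -b k) * chirp (fun k => a k / (2 * -b k)) x *
        (𝐞 ⟪lctScale b u, x⟫ • 𝓕 (fun t => f t * chirp (fun k => a k / (2 * b k)) t)
          (lctScale b u)) := by
  have hchirp := chirp_mul_chirp_eq_one (w := fun k => d k / (2 * b k))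
    (w' := fun k => d k / (2 * -b k)) (fun k => by rw [mul_neg, div_neg, add_neg_cancel]) u
  rw [lct_eq_fourier, lctKernel_eq, inner_lctScale_neg, neg_neg, Circle.smul_def, smul_eq_mul]
  linear_combination (lctConst b * lctConst (fun k => -b k) *
    chirp (fun k => a k / (2 * -b k)) x * 𝐞 ⟪lctScale b u, x⟫ *
    𝓕 (fun t => f t * chirp (fun k => a k / (2 * b k)) t) (lctScale b u)) * hchirp

theorem lctConst_mul_lctConst_neg (b : Fin n → ℝ) :
    lctConst b * lctConst (fun k => -b k) = |LinearMap.det (lctScale b)| := by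
  rw [lctConst, lctConst, ← Finset.prod_mul_distrib, det_lctScale, Finset.abs_prod, ofReal_prod]
  refine Finset.prod_congr rfl fun k _ => ?_
  have hconj :
      (2 * (π : ℂ) * I * ((-b k : ℝ) : ℂ))⁻¹ = conj (2 * (π : ℂ) * I * (b k : ℂ))⁻¹ := by
    simp [map_ofNat]
  have harg : (2 * (π : ℂ) * I * (b k : ℂ))⁻¹.arg ≠ π := by
    simp [arg_eq_pi_iff]
  rw [hconj, cpow_half_mul_conj_cpow_half harg]
  simp

end LinearCanonicalTransform

theorem lct_inversion_general (n : ℕ) (a b d : Fin n → ℝ) (hb : ∀ k, b k ≠ 0)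
    (f : SchwartzMap (EuclideanSpace ℝ (Fin n)) ℂ)
    (x : EuclideanSpace ℝ (Fin n)) :
    (∀ u : EuclideanSpace ℝ (Fin n),
      Integrable (fun t : EuclideanSpace ℝ (Fin n) => f t * lctKernel a b d t u)) ∧
    Integrable (fun u : EuclideanSpace ℝ (Fin n) =>
      lct a b d (⇑f) u * lctKernel d (fun k => -(b k)) a u x) ∧
    lct d (fun k => -(b k)) a (lct a b d (⇑f)) x = f x := by
  obtain ⟨g, hg⟩ : ∃ g : SchwartzMap (EuclideanSpace ℝ (Fin n)) ℂ,
      ⇑g = fun t => f t * chirp (fun k => a k / (2 * b k)) t :=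
    ⟨SchwartzMap.bilinLeftCLM (ContinuousLinearMap.mul ℝ ℂ) (chirp_hasTemperateGrowth _) f, rfl⟩
  have hT : LinearMap.det (lctScale b) ≠ 0 := by
    rw [det_lctScale]
    exact Finset.prod_ne_zero_iff.2 fun k _ => by simp [pi_ne_zero, hb k]
  have hH : Integrable fun ξ => 𝐞 ⟪ξ, x⟫ • 𝓕 (⇑g) ξ := by
    simpa [inner_neg_right] using (fourierIntegral_convergent_iff (-x)).2 (𝓕 g).integrable
  refine ⟨integrable_mul_lctKernel a b d f.integrable, ?_, ?_⟩
  · simp_rw [lct_mul_lctKernel_inv, ← hg]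
    exact ((integrable_comp_linearMap_iff volume hT).2 hH).const_mul _
  · rw [lct]
    simp_rw [lct_mul_lctKernel_inv, ← hg]
    rw [integral_const_mul, integral_comp_linearMap volume hT (fun ξ => 𝐞 ⟪ξ, x⟫ • 𝓕 (⇑g) ξ),
      ← fourierInv_eq, g.continuous.fourierInv_fourier_eq g.integrable (𝓕 g).integrable,
      lctConst_mul_lctConst_neg, Complex.real_smul]
    have hchirp := chirp_mul_chirp_eq_one (w := fun k => a k / (2 * -b k))
      (w' := fun k => a k / (2 * b k)) (fun k => by rw [mul_neg, div_neg, neg_add_cancel]) x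
    have hdet : ((|LinearMap.det (lctScale b)| : ℝ) : ℂ) *
        ((|LinearMap.det (lctScale b)|⁻¹ : ℝ) : ℂ) = 1 := by
      rw [← ofReal_mul, mul_inv_cancel₀ (abs_ne_zero.2 hT), ofReal_one]
    rw [congrFun hg x]
    linear_combination (chirp (fun k => a k / (2 * -b k)) x * chirp (fun k => a k / (2 * b k)) x *
      f x) * hdet + f x * hchirp

/-- For matrices `Aₖ = [[aₖ,bₖ],[cₖ,dₖ]]` of determinant one with
`bₖ ≠ 0` and inverses `Aₖ⁻¹ = [[dₖ,-bₖ],[-cₖ,aₖ]]`, for every Schwartz function `f`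
and every `x`, the inversion formula `𝓛_{A⁻¹}(𝓛_A f)(x) = f(x)` holds, where both
linear canonical transforms are absolutely convergent integrals. -/
theorem lct_inversion (n : ℕ) (hn : 1 ≤ n) (a b c d : Fin n → ℝ)
    (hdet : ∀ k, a k * d k - b k * c k = 1) (hb : ∀ k, b k ≠ 0)
    (f : SchwartzMap (EuclideanSpace ℝ (Fin n)) ℂ)
    (x : EuclideanSpace ℝ (Fin n)) :
    (∀ u : EuclideanSpace ℝ (Fin n),
      Integrable (fun t : EuclideanSpace ℝ (Fin n) => f t * lctKernel a b d t u)) ∧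
    Integrable (fun u : EuclideanSpace ℝ (Fin n) =>
      lct a b d (⇑f) u * lctKernel d (fun k => -(b k)) a u x) ∧
    lct d (fun k => -(b k)) a (lct a b d (⇑f)) x = f x :=
  lct_inversion_general n a b d hb f x
end

section
/- For every real λ ≠ 0, the function x ↦ (exp(i λ x²) − 1) · log |x/(x−1)| is not in L¹(ℝ); that is, ∫_ℝ |exp(i λ x²) − 1| · | log |x/(x−1)| | dx = +∞. Consequently, if f = 𝟙_{[0,1]} and H denotes the Hilbert transform (so Hf(x) = (1/π) log |x/(x−1)| for x ∉ {0,1}), then the chirp-modulated difference (exp(i λ (·)²) − 1) · Hf has infinite L¹(ℝ) norm, so the linear canonical Hilbert transform of f does not converge to Hf in L¹(ℝ) as the chirp parameter λ → 0 through nonzero values. -/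
/-!
For `x > 1` we have `|log |x/(x-1)|| ≥ 1/x` and `‖exp(iθ) - 1‖ ≥ 1 - cos θ`, so the integrand
dominates `(1 - cos (λx²))/x` on `(1, ∞)`. The integral of the latter over `(1, b)` is
`log b - ∫₁ᵇ cos (λx²)/x dx`, and the oscillatory part stays bounded by `1/|λ|`: integrate by
parts against `d(sin (λx²)) = 2λx cos (λx²) dx`. So the integral diverges like `log b`, every
nonzero multiple of the function has infinite `L¹` norm, and in particular these norms cannot
tend to `0` as `λ → 0`.
-/

open MeasureTheory Filter Topology Set intervalIntegral
open scoped ENNReal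

lemma hasDerivAt_inv_two_mul_mul_sq {c x : ℝ} (hc : c ≠ 0) (hx : x ≠ 0) :
    HasDerivAt (fun x => (2 * c * x ^ 2)⁻¹) (-(c * x ^ 3)⁻¹) x :=
  ((hasDerivAt_inv (by positivity)).comp x
    ((hasDerivAt_pow 2 x).const_mul (2 * c))).congr_deriv (by field_simp; ring)

lemma continuousOn_inv_mul_pow_three {c a b : ℝ} (hc : c ≠ 0) (ha : 0 < a) (hab : a ≤ b) :
    ContinuousOn (fun x => (c * x ^ 3)⁻¹) (uIcc a b) := by
  refine ContinuousOn.inv₀ (by fun_prop) fun x hx => ?_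
  rw [uIcc_of_le hab] at hx
  have := ha.trans_le hx.1
  positivity

lemma integral_inv_mul_pow_three {c a b : ℝ} (hc : c ≠ 0) (ha : 0 < a) (hab : a ≤ b) :
    ∫ x in a..b, (c * x ^ 3)⁻¹ = (2 * c * a ^ 2)⁻¹ - (2 * c * b ^ 2)⁻¹ := by
  have h := integral_eq_sub_of_hasDerivAt
    (fun x hx => hasDerivAt_inv_two_mul_mul_sq hc (ha.trans_le (uIcc_of_le hab ▸ hx).1).ne')
    (continuousOn_inv_mul_pow_three hc ha hab).neg.intervalIntegrable
  rw [intervalIntegral.integral_neg] at h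
  linarith

lemma abs_integral_cos_mul_sq_div_le {l a b : ℝ} (hl : l ≠ 0) (ha : 0 < a) (hab : a ≤ b) :
    |∫ x in a..b, Real.cos (l * x ^ 2) / x| ≤ (|l| * a ^ 2)⁻¹ := by
  have habs : |l| ≠ 0 := abs_ne_zero.mpr hl
  have hv : ∀ x ∈ uIcc a b, HasDerivAt (fun x => Real.sin (l * x ^ 2))
      (2 * l * x * Real.cos (l * x ^ 2)) x := fun x _ =>
    ((hasDerivAt_pow 2 x).const_mul l).sin.congr_deriv (by ring)
  have hparts := integral_mul_deriv_eq_deriv_mul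
    (fun x hx => hasDerivAt_inv_two_mul_mul_sq hl (ha.trans_le (uIcc_of_le hab ▸ hx).1).ne') hv
    (continuousOn_inv_mul_pow_three hl ha hab).neg.intervalIntegrable
    (Continuous.intervalIntegrable (by fun_prop) _ _)
  have hrewrite : ∫ x in a..b, Real.cos (l * x ^ 2) / x
      = ∫ x in a..b, (2 * l * x ^ 2)⁻¹ * (2 * l * x * Real.cos (l * x ^ 2)) :=
    integral_congr fun x hx => by have := (ha.trans_le (uIcc_of_le hab ▸ hx).1).ne'; field_simp
  have hboundary : ∀ x, 0 < x →
      |(2 * l * x ^ 2)⁻¹ * Real.sin (l * x ^ 2)| ≤ (2 * |l| * x ^ 2)⁻¹ := by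
    intro x hx
    rw [abs_mul, abs_inv, abs_mul, abs_mul, abs_two, abs_of_pos (pow_pos hx 2)]
    exact mul_le_of_le_one_right (by positivity) (Real.abs_sin_le_one _)
  have hrem : |∫ x in a..b, -(l * x ^ 3)⁻¹ * Real.sin (l * x ^ 2)|
      ≤ (2 * |l| * a ^ 2)⁻¹ - (2 * |l| * b ^ 2)⁻¹ := by
    rw [← integral_inv_mul_pow_three habs ha hab, ← Real.norm_eq_abs]
    refine norm_integral_le_of_norm_le hab (ae_of_all volume fun x hx => ?_)
      (continuousOn_inv_mul_pow_three habs ha hab).intervalIntegrable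
    have hx : 0 < x := ha.trans hx.1
    rw [norm_mul, norm_neg, norm_inv, norm_mul, norm_pow, Real.norm_eq_abs, Real.norm_eq_abs,
      abs_of_pos hx]
    exact mul_le_of_le_one_right (by positivity) (Real.abs_sin_le_one _)
  have hb := hboundary b (ha.trans_le hab)
  have ha' := hboundary a ha
  rw [hrewrite, hparts]
  calc _ ≤ _ := abs_sub _ _
    _ ≤ _ := add_le_add (abs_sub _ _) hrem
    _ ≤ (2 * |l| * b ^ 2)⁻¹ + (2 * |l| * a ^ 2)⁻¹
          + ((2 * |l| * a ^ 2)⁻¹ - (2 * |l| * b ^ 2)⁻¹) := by gcongr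
    _ = (|l| * a ^ 2)⁻¹ := by ring

lemma log_sub_log_sub_le_integral_one_sub_cos_mul_sq_div {l a b : ℝ} (hl : l ≠ 0) (ha : 0 < a)
    (hab : a ≤ b) :
    Real.log b - Real.log a - (|l| * a ^ 2)⁻¹ ≤ ∫ x in a..b, (1 - Real.cos (l * x ^ 2)) / x := by
  have hne : ∀ x ∈ uIcc a b, x ≠ 0 := fun x hx => by
    rw [uIcc_of_le hab] at hx; exact (ha.trans_le hx.1).ne'
  have hsplit : ∫ x in a..b, (1 - Real.cos (l * x ^ 2)) / x
      = (∫ x in a..b, x⁻¹) - ∫ x in a..b, Real.cos (l * x ^ 2) / x := by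
    have hcos : IntervalIntegrable (fun x => Real.cos (l * x ^ 2) / x) volume a b :=
      (ContinuousOn.div (by fun_prop) continuousOn_id hne).intervalIntegrable
    rw [← integral_sub (intervalIntegrable_inv hne continuousOn_id) hcos]
    exact integral_congr fun x _ => by rw [sub_div, one_div]
  rw [hsplit, integral_inv_of_pos ha (ha.trans_le hab), Real.log_div (ha.trans_le hab).ne' ha.ne']
  linarith [(abs_le.mp (abs_integral_cos_mul_sq_div_le hl ha hab)).2]

lemma tendsto_integral_one_sub_cos_mul_sq_div_atTop {l a : ℝ} (hl : l ≠ 0) (ha : 0 < a) :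
    Tendsto (fun b => ∫ x in a..b, (1 - Real.cos (l * x ^ 2)) / x) atTop atTop := by
  refine tendsto_atTop_mono' _ ?_
    ((Real.tendsto_log_atTop.atTop_add (tendsto_const_nhds (x := -Real.log a - (|l| * a ^ 2)⁻¹))))
  filter_upwards [eventually_ge_atTop a] with b hab
  linarith [log_sub_log_sub_le_integral_one_sub_cos_mul_sq_div hl ha hab]

lemma lintegral_Ioi_ofReal_eq_top_of_tendsto_intervalIntegral {f : ℝ → ℝ} {a : ℝ}
    (hf : ∀ x ∈ Ioi a, 0 ≤ f x) (h : Tendsto (fun b => ∫ x in a..b, f x) atTop atTop) :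
    ∫⁻ x in Ioi a, ENNReal.ofReal (f x) = ⊤ := by
  refine top_le_iff.mp (le_of_tendsto (ENNReal.tendsto_ofReal_atTop.comp h) ?_)
  filter_upwards [eventually_ge_atTop a] with b hab
  calc ENNReal.ofReal (∫ x in a..b, f x)
      ≤ ‖∫ x in Ioc a b, f x‖ₑ := by
        rw [integral_of_le hab]; exact Real.ofReal_le_enorm _
    _ ≤ ∫⁻ x in Ioc a b, ‖f x‖ₑ := enorm_integral_le_lintegral_enorm _
    _ = ∫⁻ x in Ioc a b, ENNReal.ofReal (f x) :=
        setLIntegral_congr_fun measurableSet_Ioc fun x hx =>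
          Real.enorm_of_nonneg (hf x (Ioc_subset_Ioi_self hx))
    _ ≤ ∫⁻ x in Ioi a, ENNReal.ofReal (f x) := lintegral_mono_set Ioc_subset_Ioi_self

lemma one_sub_cos_le_norm_exp_I_mul_sub_one (θ : ℝ) :
    1 - Real.cos θ ≤ ‖Complex.exp (Complex.I * θ) - 1‖ := by
  have hcos : Real.cos θ = 1 - 2 * Real.sin (θ / 2) ^ 2 := by
    rw [← Real.cos_two_mul_eq_one_sub, mul_div_cancel₀ θ two_ne_zero]
  have hsin := Real.abs_sin_le_one (θ / 2)
  rw [Complex.norm_exp_I_mul_ofReal_sub_one, norm_mul, Real.norm_eq_abs, Real.norm_eq_abs,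
    abs_two, hcos, ← sq_abs]
  nlinarith [abs_nonneg (Real.sin (θ / 2))]

lemma inv_le_abs_log_abs_div_sub_one {x : ℝ} (hx : 1 < x) :
    x⁻¹ ≤ |Real.log (|x / (x - 1)|)| := by
  have hx1 : 0 < x - 1 := sub_pos.mpr hx
  have hq : 0 < x / (x - 1) := div_pos (by linarith) hx1
  have := Real.one_sub_inv_le_log_of_pos hq
  rw [inv_div, one_sub_div (by positivity), sub_sub_cancel, one_div] at this
  rw [abs_of_pos hq]
  exact this.trans (le_abs_self _)

lemma lintegral_norm_exp_sub_one_mul_abs_log_eq_top {l : ℝ} (hl : l ≠ 0) :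
    ∫⁻ x : ℝ, ENNReal.ofReal (‖Complex.exp (Complex.I * ((l * x ^ 2 : ℝ) : ℂ)) - 1‖ *
      |Real.log (|x / (x - 1)|)|) = ⊤ := by
  refine top_le_iff.mp ?_
  calc ⊤ = ∫⁻ x in Ioi 1, ENNReal.ofReal ((1 - Real.cos (l * x ^ 2)) / x) :=
        (lintegral_Ioi_ofReal_eq_top_of_tendsto_intervalIntegral
          (fun x hx => div_nonneg (sub_nonneg.mpr (Real.cos_le_one _)) (zero_le_one.trans hx.le))
          (tendsto_integral_one_sub_cos_mul_sq_div_atTop hl one_pos)).symm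
    _ ≤ ∫⁻ x in Ioi 1, ENNReal.ofReal (‖Complex.exp (Complex.I * ((l * x ^ 2 : ℝ) : ℂ)) - 1‖ *
          |Real.log (|x / (x - 1)|)|) := by
        refine setLIntegral_mono' measurableSet_Ioi fun x hx => ENNReal.ofReal_le_ofReal ?_
        rw [div_eq_mul_inv]
        exact mul_le_mul (one_sub_cos_le_norm_exp_I_mul_sub_one _)
          (inv_le_abs_log_abs_div_sub_one hx) (inv_nonneg.mpr (zero_le_one.trans hx.le))
          (norm_nonneg _)
    _ ≤ _ := setLIntegral_le_lintegral _ _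

lemma eLpNorm_one_exp_sub_one_mul_const_mul_log_eq_top {l c : ℝ} (hl : l ≠ 0) (hc : c ≠ 0) :
    eLpNorm (fun x : ℝ => (Complex.exp (Complex.I * ((l * x ^ 2 : ℝ) : ℂ)) - 1) *
      ((c * Real.log |x / (x - 1)| : ℝ) : ℂ)) 1 volume = ⊤ := by
  have henorm : ∀ x : ℝ, ‖(Complex.exp (Complex.I * ((l * x ^ 2 : ℝ) : ℂ)) - 1) *
      ((c * Real.log |x / (x - 1)| : ℝ) : ℂ)‖ₑ = ENNReal.ofReal |c| *
        ENNReal.ofReal (‖Complex.exp (Complex.I * ((l * x ^ 2 : ℝ) : ℂ)) - 1‖ *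
          |Real.log (|x / (x - 1)|)|) := fun x => by
    rw [← ofReal_norm, ← ENNReal.ofReal_mul (abs_nonneg c), norm_mul, Complex.norm_real,
      Real.norm_eq_abs, abs_mul]
    ring_nf
  rw [eLpNorm_one_eq_lintegral_enorm, lintegral_congr henorm,
    lintegral_const_mul' _ _ ENNReal.ofReal_ne_top, lintegral_norm_exp_sub_one_mul_abs_log_eq_top hl,
    ENNReal.mul_top (by simpa using hc)]

/-- For every real `λ ≠ 0`, the function
`x ↦ (exp(i λ x²) − 1) log |x/(x−1)|` is not in `L¹(ℝ)`: its absolute-value integral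
is `+∞`. Consequently, for `f = 𝟙_{[0,1]}` with Hilbert transform
`Hf(x) = (1/π) log |x/(x−1)|` (for `x ∉ {0,1}`), the chirp-modulated difference
`(exp(i λ ·²) − 1) · Hf` has infinite `L¹(ℝ)` norm, so the linear canonical Hilbert
transform of `f` does not converge to `Hf` in `L¹(ℝ)` as `λ → 0` through nonzero
values. -/
theorem chirp_modulated_hilbert_not_L1 :
    (∀ l : ℝ, l ≠ 0 →
      (∫⁻ x : ℝ, ENNReal.ofReal
          (‖Complex.exp (Complex.I * ((l * x ^ 2 : ℝ) : ℂ)) - 1‖ *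
            |Real.log (|x / (x - 1)|)|) = ⊤) ∧
      ¬ Integrable (fun x : ℝ =>
          (Complex.exp (Complex.I * ((l * x ^ 2 : ℝ) : ℂ)) - 1) *
            ((Real.log |x / (x - 1)| : ℝ) : ℂ)) ∧
      eLpNorm (fun x : ℝ =>
          (Complex.exp (Complex.I * ((l * x ^ 2 : ℝ) : ℂ)) - 1) *
            (((1 / Real.pi) * Real.log |x / (x - 1)| : ℝ) : ℂ)) 1 volume = ⊤) ∧
    ¬ Tendsto (fun l : ℝ =>
        eLpNorm (fun x : ℝ =>
          (Complex.exp (Complex.I * ((l * x ^ 2 : ℝ) : ℂ)) - 1) *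
            (((1 / Real.pi) * Real.log |x / (x - 1)| : ℝ) : ℂ)) 1 volume)
      (𝓝[≠] (0 : ℝ)) (𝓝 0) := by
  have hnorm_top : ∀ l : ℝ, l ≠ 0 → eLpNorm (fun x : ℝ =>
      (Complex.exp (Complex.I * ((l * x ^ 2 : ℝ) : ℂ)) - 1) *
        (((1 / Real.pi) * Real.log |x / (x - 1)| : ℝ) : ℂ)) 1 volume = ⊤ := fun l hl =>
    eLpNorm_one_exp_sub_one_mul_const_mul_log_eq_top hl (by positivity)
  refine ⟨fun l hl => ⟨lintegral_norm_exp_sub_one_mul_abs_log_eq_top hl, fun hint => ?_, hnorm_top l hl⟩,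
    fun htend => ?_⟩
  · have := eLpNorm_one_exp_sub_one_mul_const_mul_log_eq_top hl one_ne_zero
    simp only [one_mul] at this
    exact (memLp_one_iff_integrable.mpr hint).eLpNorm_ne_top this
  · obtain ⟨l, hlt, htop⟩ := ((htend.eventually (gt_mem_nhds zero_lt_one)).and
      (eventually_nhdsWithin_of_forall hnorm_top)).exists
    rw [htop] at hlt
    exact not_top_lt hlt
end
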